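/- Suppose Assumptions 1 and 3 hold and define π(R) = ∫₀^∞ max{0, mz − R} dΦ(z). For λ ∈ (0, λ̄), let R_f(λ) be the unique R ∈ (1, 1/β) satisfying β(R + λπ(R)) = 1 (the fundamental equilibrium interest rate), and for λ > λ̄, let R_b(λ) be the unique R ∈ (1, ∞) satisfying β(R + λπ(R)) = R (the bubbly equilibrium interest rate). Then λ ↦ R_f(λ) is strictly decreasing on (0, λ̄) and λ ↦ R_b(λ) is strictly increasing on (λ̄, ∞). (Proposition 5: the equilibrium interest rate is V-shaped in leverage.) -/

import Mathlib

open Filter Topology MeasureTheory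

/-- **Assumption 1.** `Φ` (the law `μ` of productivity) is an absolutely continuous
cdf on `[0,∞)` with `Φ(z) < 1` for all `z` and a finite mean. -/
structure Assumption1 (μ : Measure ℝ) : Prop where
  prob : IsProbabilityMeasure μ
  supp : μ (Set.Iio 0) = 0
  absCont : μ ≪ MeasureTheory.volume
  lt_one : ∀ z : ℝ, μ (Set.Iic z) < 1
  finite_mean : Integrable id μ

/-- The cdf `Φ` of the productivity distribution `μ`. -/
noncomputable def Phi (μ : Measure ℝ) (z : ℝ) : ℝ := (μ (Set.Iic z)).toReal

/-- The risk premium `π(R) = ∫ max{0, mz − R} dΦ(z)` on unlevered capital investment. -/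
noncomputable def premium (μ : Measure ℝ) (m R : ℝ) : ℝ := ∫ z, max 0 (m * z - R) ∂μ

/-- The leverage threshold `λ̄ = ((1−β)/β)·(∫ max{mz−1, 0} dΦ(z))⁻¹`. -/
noncomputable def lamBar (β m : ℝ) (μ : Measure ℝ) : ℝ :=
  ((1 - β) / β) * (∫ z, max (m * z - 1) 0 ∂μ)⁻¹

/-- **Trend stationary equilibrium** of the two-sector large open economy with linear
technology `F(K,X) = mK + DX`: gross risk-free rate `R > 1`, growth rate `G > 0`,
threshold `z̄ = R/m` with `Φ(z̄) > 1 − 1/λ`, and sequences of aggregate wealth,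
capital, land price, and external savings satisfying the equilibrium conditions,
with `B_t/W_t → 0`. -/
structure TSE (μ : Measure ℝ) (β lam m D : ℝ)
    (R G : ℝ) (W K P B : ℕ → ℝ) : Prop where
  hR : 1 < R
  hG : 0 < G
  hthr : 1 - 1 / lam < Phi μ (R / m)
  hW : ∀ t, 0 < W t
  hP : ∀ t, 0 < P t
  price : ∀ t, R = (P (t + 1) + D) / P t
  growth : G = β * (R + lam * premium μ m R)
  Wdyn : ∀ t, W (t + 1) = G * W t
  Kdyn : ∀ t, K (t + 1) = β * lam * W t * ∫ z in Set.Ioi (R / m), z ∂μ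
  bond : ∀ t, P t + B t = β * (lam * Phi μ (R / m) + 1 - lam) * W t
  wealth : ∀ t, W (t + 1) = m * K (t + 1) + R * (P t + B t)
  hBW : Filter.Tendsto (fun t => B t / W t) Filter.atTop (nhds 0)

open Set

/-
Write `g_λ(R) = R + λ π(R)`. The premium `π` is positive, antitone and convex, being an integral
of the convex, antitone functions `R ↦ max 0 (m z - R)`.

Bubbly branch: `β g_λ(R) = R` reads `β λ π(R) = (1 - β) R`. The left side is increasing in `λ`
and decreasing in `R`, the right side is increasing in `R`, so the root increases with `λ`.

Fundamental branch: `λ < λ̄` means exactly `β g_λ(1) < 1 = β g_λ(R_f(λ))`. A convex function that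
has increased from `1` to `R_f(λ)` keeps increasing beyond it, so `g_λ(R) ≥ 1/β` for all
`R ≥ R_f(λ)`. For `λ' > λ` and `R_f(λ') ≥ R_f(λ)` this would give
`g_λ'(R_f(λ')) > g_λ(R_f(λ')) ≥ 1/β`, which is impossible.
-/

section Premium

variable {μ : Measure ℝ} [IsFiniteMeasure μ]

theorem integrable_max_zero_mul_sub (hμ : Integrable id μ) (m R : ℝ) :
    Integrable (fun z => max 0 (m * z - R)) μ := by
  simpa [max_comm] using ((hμ.const_mul m).sub (integrable_const R)).pos_part

theorem premium_antitone (hμ : Integrable id μ) (m : ℝ) : Antitone (premium μ m) :=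
  fun _ _ h => integral_mono (integrable_max_zero_mul_sub hμ m _)
    (integrable_max_zero_mul_sub hμ m _) fun _ => max_le_max le_rfl (by linarith)

theorem convexOn_premium (hμ : Integrable id μ) (m : ℝ) : ConvexOn ℝ univ (premium μ m) := by
  refine ⟨convex_univ, fun R _ S _ a b ha hb hab => ?_⟩
  have hint := integrable_max_zero_mul_sub hμ m
  calc premium μ m (a • R + b • S)
      ≤ ∫ z, (a * max 0 (m * z - R) + b * max 0 (m * z - S)) ∂μ := by
        refine integral_mono (hint _) (((hint R).const_mul a).add ((hint S).const_mul b))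
          fun z => max_le (by positivity) ?_
        have hsplit : m * z - (a • R + b • S) = a * (m * z - R) + b * (m * z - S) := by
          simp only [smul_eq_mul]; linear_combination (-m * z) * hab
        rw [hsplit]
        gcongr <;> exact le_max_right _ _
    _ = a • premium μ m R + b • premium μ m S := by
        rw [integral_add ((hint R).const_mul a) ((hint S).const_mul b), integral_const_mul,
          integral_const_mul, premium, premium, smul_eq_mul, smul_eq_mul]

theorem premium_pos (hμ : Integrable id μ) {m : ℝ} (hm : 0 < m)
    (htail : ∀ x, 0 < μ (Ioi x)) (R : ℝ) : 0 < premium μ m R := by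
  rw [premium, integral_pos_iff_support_of_nonneg (f := fun z => max 0 (m * z - R))
    (fun _ => le_max_left _ _) (integrable_max_zero_mul_sub hμ m R)]
  refine (htail (R / m)).trans_le (measure_mono fun z hz => ?_)
  have : R < m * z := by rwa [mem_Ioi, div_lt_iff₀' hm] at hz
  simp only [Function.mem_support]
  exact (lt_max_of_lt_right (sub_pos.2 this)).ne'

end Premium

theorem Assumption1.measure_Ioi_pos {μ : Measure ℝ} (hμ : Assumption1 μ) (x : ℝ) :
    0 < μ (Ioi x) := by
  have := hμ.prob
  rw [← compl_Iic, prob_compl_eq_one_sub measurableSet_Iic]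
  exact tsub_pos_of_lt (hμ.lt_one x)

theorem lamBar_eq_div (β m : ℝ) (μ : Measure ℝ) :
    lamBar β m μ = (1 - β) / (β * premium μ m 1) := by
  simp only [lamBar, premium, max_comm (0 : ℝ)]
  ring

theorem lt_lamBar_iff {β m lam : ℝ} {μ : Measure ℝ} (hβ : 0 < β) (hc : 0 < premium μ m 1) :
    lam < lamBar β m μ ↔ β * (1 + lam * premium μ m 1) < 1 := by
  rw [lamBar_eq_div, lt_div_iff₀ (mul_pos hβ hc)]
  constructor <;> intro h <;> linarith

theorem lamBar_pos {β m : ℝ} {μ : Measure ℝ} (hβ : β ∈ Ioo (0 : ℝ) 1) (hc : 0 < premium μ m 1) :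
    0 < lamBar β m μ := by
  rw [lamBar_eq_div]
  exact div_pos (sub_pos.2 hβ.2) (mul_pos hβ.1 hc)

section Rates

variable {p : ℝ → ℝ} {β l₁ l₂ R₁ R₂ : ℝ}

theorem fundamental_rate_lt_of_lt (hp : ConvexOn ℝ univ p) (hpos : ∀ R, 0 < p R) (hβ : 0 < β)
    (hl₁ : 0 ≤ l₁) (hl : l₁ < l₂) (hbar : β * (1 + l₁ * p 1) < 1) (hR₁ : 1 < R₁)
    (he₁ : β * (R₁ + l₁ * p R₁) = 1) (he₂ : β * (R₂ + l₂ * p R₂) = 1) : R₂ < R₁ := by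
  by_contra! h
  have hg : ConvexOn ℝ univ (fun R => R + l₁ * p R) :=
    (convexOn_id convex_univ).add (hp.smul hl₁)
  have hstart : 1 + l₁ * p 1 ≤ R₁ + l₁ * p R₁ :=
    (lt_of_mul_lt_mul_left (hbar.trans_eq he₁.symm) hβ.le).le
  have hgrow : R₁ + l₁ * p R₁ ≤ R₂ + l₁ * p R₂ :=
    hg.le_right_of_left_le'' trivial trivial hR₁ h hstart
  have hlev : l₁ * p R₂ < l₂ * p R₂ := mul_lt_mul_of_pos_right hl (hpos R₂)
  have := mul_lt_mul_of_pos_left (hgrow.trans_lt (add_lt_add_right hlev R₂)) hβ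
  linarith

theorem bubbly_rate_lt_of_lt (hp : Antitone p) (hpos : ∀ R, 0 < p R) (hβ₀ : 0 < β) (hβ₁ : β ≤ 1)
    (hl₁ : 0 ≤ l₁) (hl : l₁ < l₂)
    (he₁ : β * (R₁ + l₁ * p R₁) = R₁) (he₂ : β * (R₂ + l₂ * p R₂) = R₂) : R₁ < R₂ := by
  by_contra! h
  have hpR : l₁ * p R₁ ≤ l₁ * p R₂ := mul_le_mul_of_nonneg_left (hp h) hl₁
  have hlev : l₁ * p R₂ < l₂ * p R₂ := mul_lt_mul_of_pos_right hl (hpos R₂)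
  have hroot : β * (l₁ * p R₁) < β * (l₂ * p R₂) := mul_lt_mul_of_pos_left (hpR.trans_lt hlev) hβ₀
  linarith [mul_le_mul_of_nonneg_left h (sub_nonneg.2 hβ₁)]

end Rates

theorem interest_rate_V_shaped_general
    (μ : Measure ℝ) (hμ : Assumption1 μ)
    (β m : ℝ) (hβ : β ∈ Set.Ioo (0 : ℝ) 1) (hm : 0 < m)
    (Rf Rb : ℝ → ℝ)
    (hRf : ∀ lam ∈ Set.Ioo 0 (lamBar β m μ),
      1 < Rf lam ∧ Rf lam < 1 / β ∧
        β * (Rf lam + lam * premium μ m (Rf lam)) = 1)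
    (hRb : ∀ lam ∈ Set.Ioi (lamBar β m μ),
      1 < Rb lam ∧ β * (Rb lam + lam * premium μ m (Rb lam)) = Rb lam) :
    StrictAntiOn Rf (Set.Ioo 0 (lamBar β m μ)) ∧
    StrictMonoOn Rb (Set.Ioi (lamBar β m μ)) := by
  have := hμ.prob
  have hpos := premium_pos hμ.finite_mean hm hμ.measure_Ioi_pos
  constructor
  · intro l₁ hl₁ l₂ hl₂ hl
    exact fundamental_rate_lt_of_lt (convexOn_premium hμ.finite_mean m) hpos hβ.1 hl₁.1.le hl
      ((lt_lamBar_iff hβ.1 (hpos 1)).1 hl₁.2) (hRf l₁ hl₁).1 (hRf l₁ hl₁).2.2 (hRf l₂ hl₂).2.2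
  · intro l₁ hl₁ l₂ hl₂ hl
    exact bubbly_rate_lt_of_lt (premium_antitone hμ.finite_mean m) hpos hβ.1 hβ.2.le
      ((lamBar_pos hβ (hpos 1)).trans hl₁).le hl (hRb l₁ hl₁).2 (hRb l₂ hl₂).2

/-- **Proposition 5 (the equilibrium interest rate is V-shaped in leverage).**
Under Assumptions 1 and 3, the fundamental equilibrium interest rate `R_f(λ)`
(the unique `R ∈ (1, 1/β)` with `β(R + λπ(R)) = 1`) is strictly decreasing on
`(0, λ̄)`, and the bubbly equilibrium interest rate `R_b(λ)` (the unique `R > 1`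
with `β(R + λπ(R)) = R`) is strictly increasing on `(λ̄, ∞)`. -/
theorem interest_rate_V_shaped
    (μ : Measure ℝ) (hμ : Assumption1 μ)
    (β m : ℝ) (hβ : β ∈ Set.Ioo (0 : ℝ) 1) (hm : 0 < m)
    (hA3 : 1 - Phi μ (1 / m) < β * m * ∫ z in Set.Ioi (1 / m), z ∂μ)
    (Rf Rb : ℝ → ℝ)
    (hRf : ∀ lam ∈ Set.Ioo 0 (lamBar β m μ),
      1 < Rf lam ∧ Rf lam < 1 / β ∧
        β * (Rf lam + lam * premium μ m (Rf lam)) = 1)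
    (hRb : ∀ lam ∈ Set.Ioi (lamBar β m μ),
      1 < Rb lam ∧ β * (Rb lam + lam * premium μ m (Rb lam)) = Rb lam) :
    StrictAntiOn Rf (Set.Ioo 0 (lamBar β m μ)) ∧
    StrictMonoOn Rb (Set.Ioi (lamBar β m μ)) :=
  interest_rate_V_shaped_general μ hμ β m hβ hm Rf Rb hRf hRb
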